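/- arXiv:1511.08555 — 2 statements merged into one kernel-verified Lean document; each statement's English description precedes it below -/
import Mathlib

section
/- Define g(n) = (n+1)^2 * (2/n^2 + sum_{k=1}^{n-1} 1/(k*(n-k))^2). Then for all integers n ≥ 4, g(n) > g(n+1), i.e., g is strictly decreasing on n ≥ 4. -/
open Finset

lemma refl_sum (n : ℕ) (f : ℝ → ℝ) :
    ∑ k ∈ Icc 1 (n-1), f ((n:ℝ) - (k:ℝ)) = ∑ k ∈ Icc 1 (n-1), f (k:ℝ) := by
  apply Finset.sum_nbij' (fun k => n - k) (fun k => n - k)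
  · intro a ha; simp only [mem_Icc] at *; omega
  · intro a ha; simp only [mem_Icc] at *; omega
  · intro a ha; simp only [mem_Icc] at *; omega
  · intro a ha; simp only [mem_Icc] at *; omega
  · intro a ha
    simp only [mem_Icc] at ha
    congr 1
    have : a ≤ n := by omega
    push_cast [Nat.cast_sub this]
    ring

lemma closed_form (n : ℕ) (hn : 1 ≤ n) :
    ∑ k ∈ Icc 1 (n-1), (1:ℝ) / ((k:ℝ) * ((n:ℝ) - (k:ℝ)))^2
    = 2/(n:ℝ)^2 * (∑ k ∈ Icc 1 (n-1), (1:ℝ)/(k:ℝ)^2)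
      + 4/(n:ℝ)^3 * (∑ k ∈ Icc 1 (n-1), (1:ℝ)/(k:ℝ)) := by
  have hN : (0:ℝ) < (n:ℝ) := by exact_mod_cast hn
  have step : ∀ k ∈ Icc 1 (n-1),
      (1:ℝ) / ((k:ℝ) * ((n:ℝ) - (k:ℝ)))^2
      = (1/(n:ℝ)^2 * (1/(k:ℝ)^2) + 2/(n:ℝ)^3 * (1/(k:ℝ)))
        + (1/(n:ℝ)^2 * (1/((n:ℝ)-(k:ℝ))^2) + 2/(n:ℝ)^3 * (1/((n:ℝ)-(k:ℝ)))) := by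
    intro k hk
    simp only [mem_Icc] at hk
    have hk1 : (1:ℝ) ≤ (k:ℝ) := by exact_mod_cast hk.1
    have hk2 : (k:ℝ) ≤ (n:ℝ) - 1 := by
      have : k + 1 ≤ n := by omega
      have := (Nat.cast_le (α := ℝ)).2 this
      push_cast at this; linarith
    have hx : (k:ℝ) ≠ 0 := by linarith
    have hy : (n:ℝ) - (k:ℝ) ≠ 0 := by intro h; linarith [hk2]
    field_simp
    ring
  rw [Finset.sum_congr rfl step, Finset.sum_add_distrib]
  have h1 : ∑ k ∈ Icc 1 (n-1), (1/(n:ℝ)^2 * (1/((n:ℝ)-(k:ℝ))^2) + 2/(n:ℝ)^3 * (1/((n:ℝ)-(k:ℝ))))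
      = ∑ k ∈ Icc 1 (n-1), (1/(n:ℝ)^2 * (1/(k:ℝ)^2) + 2/(n:ℝ)^3 * (1/(k:ℝ))) :=
    refl_sum n (fun x => 1/(n:ℝ)^2 * (1/x^2) + 2/(n:ℝ)^3 * (1/x))
  rw [h1, Finset.sum_add_distrib, ← Finset.mul_sum, ← Finset.mul_sum]
  ring

theorem g_strict_anti (g : ℕ → ℝ)
    (hg : ∀ n : ℕ, g n = ((n : ℝ) + 1) ^ 2 * (2 / (n : ℝ) ^ 2
      + ∑ k ∈ Finset.Icc 1 (n - 1), (1 : ℝ) / ((k : ℝ) * ((n : ℝ) - (k : ℝ))) ^ 2)) :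
    ∀ n : ℕ, 4 ≤ n → g n > g (n + 1) := by
  intro n hn
  set N : ℝ := (n : ℝ) with hNdef
  have hN4 : (4:ℝ) ≤ N := by rw [hNdef]; exact_mod_cast hn
  have hN0 : (0:ℝ) < N := by linarith
  have hN1 : (0:ℝ) < N + 1 := by linarith
  set a : ℝ := ∑ k ∈ Icc 1 (n-1), (1:ℝ)/(k:ℝ) with hadef
  set b : ℝ := ∑ k ∈ Icc 1 (n-1), (1:ℝ)/(k:ℝ)^2 with hbdef
  -- a, b ≥ 1
  have h1mem : 1 ∈ Icc 1 (n-1) := by simp only [mem_Icc]; omega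
  have ha1 : (1:ℝ) ≤ a := by
    rw [hadef]
    have h := Finset.single_le_sum (f := fun k : ℕ => (1:ℝ)/(k:ℝ))
      (fun i _ => by positivity) h1mem
    norm_num at h ⊢
    exact h
  have hb1 : (1:ℝ) ≤ b := by
    rw [hbdef]
    have h := Finset.single_le_sum (f := fun k : ℕ => (1:ℝ)/(k:ℝ)^2)
      (fun i _ => by positivity) h1mem
    norm_num at h ⊢
    exact h
  -- closed form for g n
  have hgn : g n = (N + 1)^2 * (2/N^2 + (2/N^2 * b + 4/N^3 * a)) := by
    rw [hg n, closed_form n (by omega)]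
  -- sums at n+1
  have hsplit : ∀ f : ℕ → ℝ, ∑ k ∈ Icc 1 n, f k = (∑ k ∈ Icc 1 (n-1), f k) + f n := by
    intro f
    have h : n = (n - 1) + 1 := by omega
    rw [h, Finset.sum_Icc_succ_top (by omega)]
    congr 1
  have hA' : ∑ k ∈ Icc 1 n, (1:ℝ)/(k:ℝ) = a + 1/N := by rw [hsplit]
  have hB' : ∑ k ∈ Icc 1 n, (1:ℝ)/(k:ℝ)^2 = b + 1/N^2 := by rw [hsplit]
  have hgn1 : g (n+1) = (N + 2)^2 * (2/(N+1)^2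
      + (2/(N+1)^2 * (b + 1/N^2) + 4/(N+1)^3 * (a + 1/N))) := by
    have hcf := closed_form (n+1) (by omega)
    rw [hg (n+1)]
    simp only [Nat.add_sub_cancel] at hcf ⊢
    push_cast at hcf ⊢
    rw [hcf, hA', hB']
    ring
  -- the difference
  have key : g n - g (n+1)
      = 2 * (2*a - 3*N + N*b + 10*N*a - 11*N^2 + 5*N^2*b + 20*N^2*a
          - 7*N^3 + 6*N^3*b + 12*N^3*a - N^4 + 2*N^4*b + 2*N^4*a)
        / (N^3 * (N+1)^3) := by
    rw [hgn, hgn1]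
    field_simp
    ring
  have hP : (0:ℝ) < 2*a - 3*N + N*b + 10*N*a - 11*N^2 + 5*N^2*b + 20*N^2*a
      - 7*N^3 + 6*N^3*b + 12*N^3*a - N^4 + 2*N^4*b + 2*N^4*a := by
    have h1 : (0:ℝ) ≤ (a-1)*(2+10*N+20*N^2+12*N^3+2*N^4) :=
      mul_nonneg (by linarith) (by positivity)
    have h2 : (0:ℝ) ≤ (b-1)*(N+5*N^2+6*N^3+2*N^4) :=
      mul_nonneg (by linarith) (by positivity)
    nlinarith [pow_pos hN0 2, pow_pos hN0 3, pow_pos hN0 4, sq_nonneg N,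
      mul_pos (mul_pos hN0 hN0) hN0]
  have hden : (0:ℝ) < N^3 * (N+1)^3 := by positivity
  have : (0:ℝ) < g n - g (n+1) := by
    rw [key]; positivity
  linarith
end

section
/- If a sequence a : ℕ → ℝ satisfies a(0) = 1, a(n) ≥ 0 for all n, the recursion a(n+1) = sum_{k=0}^{n} a(k)*a(n-k), and a(n) ≤ M^n/n^2 for some M > 0 and all 1 ≤ n ≤ N with N ≥ 37 and M ≥ 6, then a(n) ≤ M^n/n^2 for all n ≥ 1. -/
open Finset

noncomputable def Ph (n : ℕ) : ℝ := ∑ k ∈ Finset.Ico 1 n, 1 / (k : ℝ) ^ 2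
noncomputable def Hh (n : ℕ) : ℝ := ∑ k ∈ Finset.Ico 1 n, 1 / (k : ℝ)

lemma Ph_succ (n : ℕ) (hn : 1 ≤ n) : Ph (n + 1) = Ph n + 1 / (n : ℝ) ^ 2 := by
  unfold Ph; rw [Finset.sum_Ico_succ_top hn]

lemma Hh_succ (n : ℕ) (hn : 1 ≤ n) : Hh (n + 1) = Hh n + 1 / (n : ℝ) := by
  unfold Hh; rw [Finset.sum_Ico_succ_top hn]

lemma Hh_ge_one (n : ℕ) (hn : 2 ≤ n) : 1 ≤ Hh n := by
  have h1 : (1 : ℕ) ∈ Finset.Ico 1 n := by simp; omega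
  have := Finset.single_le_sum (f := fun k : ℕ => 1 / (k : ℝ))
    (fun k _ => by positivity) h1
  simpa [Hh] using this

lemma reflect_sum (f : ℕ → ℝ) (n : ℕ) (hn : 1 ≤ n) :
    ∑ k ∈ Finset.Ico 1 n, f (n - k) = ∑ k ∈ Finset.Ico 1 n, f k := by
  have h := Finset.sum_Ico_reflect f 1 (n := n) (m := n) (Nat.le_succ n)
  simpa using h

lemma S_eq (n : ℕ) (hn : 1 ≤ n) :
    ∑ k ∈ Finset.Ico 1 n, 1 / ((k : ℝ) ^ 2 * ((n - k : ℕ) : ℝ) ^ 2)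
      = 2 / (n : ℝ) ^ 2 * Ph n + 4 / (n : ℝ) ^ 3 * Hh n := by
  have hterm : ∀ k ∈ Finset.Ico 1 n,
      1 / ((k : ℝ) ^ 2 * ((n - k : ℕ) : ℝ) ^ 2)
        = 1 / (n : ℝ) ^ 2 * (1 / (k : ℝ) ^ 2)
          + 1 / (n : ℝ) ^ 2 * (1 / ((n - k : ℕ) : ℝ) ^ 2)
          + 2 / (n : ℝ) ^ 3 * (1 / (k : ℝ))
          + 2 / (n : ℝ) ^ 3 * (1 / ((n - k : ℕ) : ℝ)) := by
    intro k hk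
    simp only [Finset.mem_Ico] at hk
    obtain ⟨hk1, hk2⟩ := hk
    have hknat : ((n - k : ℕ) : ℝ) = (n : ℝ) - (k : ℝ) := by
      rw [Nat.cast_sub hk2.le]
    have hx : (1 : ℝ) ≤ (k : ℝ) := by exact_mod_cast hk1
    have hy : (1 : ℝ) ≤ ((n - k : ℕ) : ℝ) := by
      have : 1 ≤ n - k := by omega
      exact_mod_cast this
    have hs : ((n - k : ℕ) : ℝ) + (k : ℝ) = (n : ℝ) := by
      rw [hknat]; ring
    have hx0 : (k : ℝ) ≠ 0 := by linarith
    have hy0 : ((n - k : ℕ) : ℝ) ≠ 0 := by linarith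
    have hn0 : (n : ℝ) ≠ 0 := by
      rw [← hs]; intro h; nlinarith
    rw [← hs]
    field_simp
    ring
  rw [Finset.sum_congr rfl hterm]
  rw [Finset.sum_add_distrib, Finset.sum_add_distrib, Finset.sum_add_distrib]
  rw [← Finset.mul_sum, ← Finset.mul_sum, ← Finset.mul_sum, ← Finset.mul_sum]
  rw [reflect_sum (fun k => 1 / (k : ℝ) ^ 2) n hn,
      reflect_sum (fun k => 1 / (k : ℝ)) n hn]
  unfold Ph Hh
  ring

lemma keyK : ∀ n : ℕ, 37 ≤ n →
    2 + 2 * Ph n + 4 * Hh n / (n : ℝ) ≤ 6 * (n : ℝ) ^ 2 / ((n : ℝ) + 1) ^ 2 := by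
  intro n hn
  induction n, hn using Nat.le_induction with
  | base =>
    have hP : Ph 37 = ∑ k ∈ Finset.range 36, 1 / ((1 + k : ℕ) : ℝ) ^ 2 := by
      unfold Ph; rw [Finset.sum_Ico_eq_sum_range]
    have hH : Hh 37 = ∑ k ∈ Finset.range 36, 1 / ((1 + k : ℕ) : ℝ) := by
      unfold Hh; rw [Finset.sum_Ico_eq_sum_range]
    rw [hP, hH]
    simp only [Finset.sum_range_succ, Finset.sum_range_zero]
    norm_num
  | succ n hn ih =>
    have hn1 : 1 ≤ n := by omega
    have hnR : (37 : ℝ) ≤ (n : ℝ) := by exact_mod_cast hn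
    have hH1 : 1 ≤ Hh n := Hh_ge_one n (by omega)
    rw [Ph_succ n hn1, Hh_succ n hn1]
    push_cast
    have hn0 : (0 : ℝ) < (n : ℝ) := by linarith
    have h1 : 4 * (Hh n + 1 / (n : ℝ)) / ((n : ℝ) + 1) ≤ 4 * Hh n / (n : ℝ) := by
      rw [div_le_div_iff₀ (by linarith) hn0]
      have : 4 * (Hh n * n + 1) ≤ 4 * (Hh n * (n + 1)) := by nlinarith
      calc 4 * (Hh n + 1 / (n:ℝ)) * n = 4 * (Hh n * n + 1) := by field_simp
        _ ≤ 4 * (Hh n * (n+1)) := this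
        _ = 4 * Hh n * ((n:ℝ) + 1) := by ring
    have h2 : 6 * (n : ℝ) ^ 2 / ((n : ℝ) + 1) ^ 2 + 2 / (n : ℝ) ^ 2
        ≤ 6 * ((n : ℝ) + 1) ^ 2 / ((n : ℝ) + 2) ^ 2 := by
      rw [div_add_div _ _ (by positivity) (by positivity), div_le_div_iff₀ (by positivity) (by positivity)]
      nlinarith [sq_nonneg ((n:ℝ)), sq_nonneg ((n:ℝ)+1), sq_nonneg ((n:ℝ)+2)]
    calc 2 + 2 * (Ph n + 1 / (n : ℝ) ^ 2) + 4 * (Hh n + 1 / (n : ℝ)) / ((n : ℝ) + 1)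
        = (2 + 2 * Ph n + 2 / (n : ℝ) ^ 2) + 4 * (Hh n + 1 / (n : ℝ)) / ((n : ℝ) + 1) := by
          ring
      _ ≤ (2 + 2 * Ph n + 2 / (n : ℝ) ^ 2) + 4 * Hh n / (n : ℝ) := add_le_add_right h1 _
      _ = (2 + 2 * Ph n + 4 * Hh n / (n : ℝ)) + 2 / (n : ℝ) ^ 2 := by ring
      _ ≤ 6 * (n : ℝ) ^ 2 / ((n : ℝ) + 1) ^ 2 + 2 / (n : ℝ) ^ 2 := by linarith
      _ ≤ 6 * ((n : ℝ) + 1) ^ 2 / ((n : ℝ) + 2) ^ 2 := h2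
      _ = 6 * ((n : ℝ) + 1) ^ 2 / ((n : ℝ) + 1 + 1) ^ 2 := by ring_nf

lemma key (n : ℕ) (hn : 37 ≤ n) :
    2 / (n : ℝ) ^ 2 + ∑ k ∈ Finset.Ico 1 n, 1 / ((k : ℝ) ^ 2 * ((n - k : ℕ) : ℝ) ^ 2)
      ≤ 6 / ((n : ℝ) + 1) ^ 2 := by
  have hn0 : (0 : ℝ) < (n : ℝ) := by
    have : (37 : ℝ) ≤ (n : ℝ) := by exact_mod_cast hn
    linarith
  rw [S_eq n (by omega)]
  have hK := keyK n hn
  have : 2 / (n : ℝ) ^ 2 + (2 / (n : ℝ) ^ 2 * Ph n + 4 / (n : ℝ) ^ 3 * Hh n)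
      = (2 + 2 * Ph n + 4 * Hh n / (n : ℝ)) / (n : ℝ) ^ 2 := by
    field_simp; ring
  rw [this]
  rw [div_le_div_iff₀ (by positivity) (by positivity)]
  calc (2 + 2 * Ph n + 4 * Hh n / (n : ℝ)) * ((n : ℝ) + 1) ^ 2
      ≤ (6 * (n : ℝ) ^ 2 / ((n : ℝ) + 1) ^ 2) * ((n : ℝ) + 1) ^ 2 := by
        have hpos : (0:ℝ) < ((n:ℝ)+1)^2 := by positivity
        exact mul_le_mul_of_nonneg_right hK (le_of_lt hpos)
    _ = 6 * (n : ℝ) ^ 2 := by field_simp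

theorem induction_bound (a : ℕ → ℝ) (M : ℝ) (N : ℕ)
    (ha0 : a 0 = 1) (hpos : ∀ n, 0 ≤ a n)
    (hrec : ∀ n : ℕ, a (n + 1) = ∑ k ∈ Finset.range (n + 1), a k * a (n - k))
    (hM : 6 ≤ M) (hN : 37 ≤ N)
    (hbase : ∀ n : ℕ, 1 ≤ n → n ≤ N → a n ≤ M ^ n / (n : ℝ) ^ 2) :
    ∀ n : ℕ, 1 ≤ n → a n ≤ M ^ n / (n : ℝ) ^ 2 := by
  have hM0 : (0 : ℝ) < M := by linarith
  intro n
  induction n using Nat.strong_induction_on with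
  | _ n ih =>
    intro hn1
    by_cases hle : n ≤ N
    · exact hbase n hn1 hle
    · push_neg at hle
      obtain ⟨m, rfl⟩ : ∃ m, n = m + 1 := ⟨n - 1, by omega⟩
      have hm37 : 37 ≤ m := by omega
      have hm1 : 1 ≤ m := by omega
      have hmR : (37 : ℝ) ≤ (m : ℝ) := by exact_mod_cast hm37
      have hm0 : (0 : ℝ) < (m : ℝ) := by linarith
      -- split sum
      rw [hrec m]
      rw [Finset.range_eq_Ico]
      rw [Finset.sum_eq_sum_Ico_succ_bot (by omega) _]
      rw [Finset.sum_Ico_succ_top (by omega : 1 ≤ m)]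
      have hbnd : ∀ k, k < m + 1 → 1 ≤ k → a k ≤ M ^ k / (k : ℝ) ^ 2 := fun k hk h1 =>
        ih k hk h1
      have ham : a m ≤ M ^ m / (m : ℝ) ^ 2 := hbnd m (by omega) hm1
      have hmid : ∑ k ∈ Finset.Ico 1 m, a k * a (m - k)
          ≤ ∑ k ∈ Finset.Ico 1 m, M ^ m * (1 / ((k : ℝ) ^ 2 * ((m - k : ℕ) : ℝ) ^ 2)) := by
        apply Finset.sum_le_sum
        intro k hk
        simp only [Finset.mem_Ico] at hk
        obtain ⟨hk1, hk2⟩ := hk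
        have h1 : a k ≤ M ^ k / (k : ℝ) ^ 2 := hbnd k (by omega) hk1
        have h2 : a (m - k) ≤ M ^ (m - k) / ((m - k : ℕ) : ℝ) ^ 2 :=
          hbnd (m - k) (by omega) (by omega)
        have hk0 : (0 : ℝ) < (k : ℝ) := by exact_mod_cast hk1
        have hmk0 : (0 : ℝ) < ((m - k : ℕ) : ℝ) := by
          have : 1 ≤ m - k := by omega
          exact_mod_cast this
        have := mul_le_mul h1 h2 (hpos _) (by positivity)
        refine this.trans (le_of_eq ?_)
        rw [div_mul_div_comm, ← pow_add]
        have : k + (m - k) = m := by omega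
        rw [this]
        ring
      have hMm : (0:ℝ) < M ^ m := by positivity
      calc a 0 * a (m - 0) + (∑ k ∈ Finset.Ico 1 m, a k * a (m - k) + a m * a (m - m))
          = a m + ∑ k ∈ Finset.Ico 1 m, a k * a (m - k) + a m := by
            simp [ha0, Nat.sub_self, Nat.sub_zero]; ring
        _ ≤ M ^ m / (m : ℝ) ^ 2 + M ^ m * ∑ k ∈ Finset.Ico 1 m, (1 / ((k : ℝ) ^ 2 * ((m - k : ℕ) : ℝ) ^ 2)) + M ^ m / (m : ℝ) ^ 2 := by
            rw [← Finset.mul_sum] at hmid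
            linarith
        _ = M ^ m * (2 / (m : ℝ) ^ 2 + ∑ k ∈ Finset.Ico 1 m, 1 / ((k : ℝ) ^ 2 * ((m - k : ℕ) : ℝ) ^ 2)) := by
            ring
        _ ≤ M ^ m * (6 / ((m : ℝ) + 1) ^ 2) := by
            apply mul_le_mul_of_nonneg_left (key m hm37) (le_of_lt hMm)
        _ ≤ M ^ m * (M / ((m : ℝ) + 1) ^ 2) := by gcongr
        _ = M ^ (m + 1) / ((m : ℝ) + 1) ^ 2 := by
            rw [pow_succ]; ring
        _ = M ^ (m + 1) / ((m + 1 : ℕ) : ℝ) ^ 2 := by push_cast; ring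
end
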